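/- arXiv:1409.6258 — 4 statements merged into one kernel-verified Lean document; each statement's English description precedes it below -/
import Mathlib

section
/- There exist a matrix A ∈ GL(n+1, ℂ), a strictly increasing sequence of integers 1 = l_0 < 2 = l_1 < l_2 < ⋯ < l_{n−2}, and formal power series g_0, g_1, …, g_{n−2} ∈ ℂ[[z]] such that for each i the order of g_i is exactly l_i and the coefficient of z^{l_i} in g_i equals 1, and such that A·v = (1, z, g_0(z^k), g_1(z^k), …, g_{n−2}(z^k)) as a vector of formal power series, where g_i(z^k) denotes the substitution of z^k into g_i. (This is the normal form of the standard embedding of a generalized Fermat curve at a fixed point of its generalized Fermat group.) -/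
/-!
Write `h_t(w) = (1 + w/λ̂_t)^{1/k} = ∑ C(1/k, i) λ̂_t^{-i} w^i`, so that
`v_{t+2} = ρ_{t+1} h_t(z^k)`. The coefficients of `w, …, w^{n-1}` in `h_0, …, h_{n-2}` form
the matrix `diag(λ̂⁻¹) · Vandermonde(λ̂⁻¹) · diag(C(1/k, m))`, which is invertible because the
`λ̂_t` are distinct and nonzero and `1/k ∉ ℕ`. If `B` is its inverse, `g_i = ∑_t B_{it} (h_t - 1)`
has no constant term and its coefficients at `w, …, w^{n-1}` are those of `w^{i+1}`, so
`l_i = i + 1`. The matrix `A` fixes `1` and `z` and its other rows are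
`(-∑_t B_{it}, 0, B_{it}/ρ_{t+1})`; it is block lower triangular with invertible diagonal blocks.
-/

noncomputable def genBinom (x : ℂ) (i : ℕ) : ℂ :=
  (∏ m ∈ Finset.range i, (x - (m : ℂ))) / (Nat.factorial i : ℂ)

open PowerSeries Matrix

lemma genBinom_zero (x : ℂ) : genBinom x 0 = 1 := by simp [genBinom]

lemma genBinom_ne_zero {x : ℂ} (hx : ∀ m : ℕ, x ≠ m) (i : ℕ) : genBinom x i ≠ 0 :=
  div_ne_zero (Finset.prod_ne_zero_iff.2 fun m _ => sub_ne_zero.2 (hx m))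
    (Nat.cast_ne_zero.2 i.factorial_ne_zero)

lemma inv_natCast_ne_natCast {k : ℕ} (hk : 2 ≤ k) (m : ℕ) : (k : ℂ)⁻¹ ≠ m := by
  intro hm
  have : ((k * m : ℕ) : ℂ) = 1 := by
    push_cast
    rw [← hm, mul_inv_cancel₀ (by norm_cast; omega)]
  have := Nat.eq_one_of_mul_eq_one_right (by exact_mod_cast this)
  omega

namespace PowerSeries

variable {K : Type*} [Field K] {N : ℕ}

noncomputable def coeffMatrix (h : Fin N → K⟦X⟧) : Matrix (Fin N) (Fin N) K :=
  of fun t m => coeff (m + 1) (h t)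

noncomputable def reducedSeries (h : Fin N → K⟦X⟧) (i : Fin N) : K⟦X⟧ :=
  ∑ t, (coeffMatrix h)⁻¹ i t • (h t - 1)

theorem coeff_zero_reducedSeries {h : Fin N → K⟦X⟧} (h1 : ∀ t, constantCoeff (h t) = 1)
    (i : Fin N) : coeff 0 (reducedSeries h i) = 0 := by
  simp [reducedSeries, h1]

theorem coeff_succ_reducedSeries {h : Fin N → K⟦X⟧} (hM : IsUnit (coeffMatrix h).det)
    (i m : Fin N) : coeff (m + 1) (reducedSeries h i) = (1 : Matrix (Fin N) (Fin N) K) i m := by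
  rw [← nonsing_inv_mul _ hM, mul_apply]
  simp [reducedSeries, coeffMatrix, coeff_one]

theorem order_reducedSeries {h : Fin N → K⟦X⟧} (h1 : ∀ t, constantCoeff (h t) = 1)
    (hM : IsUnit (coeffMatrix h).det) (i : Fin N) :
    (reducedSeries h i).order = (i + 1 : ℕ) := by
  refine order_eq_nat.2 ⟨by simp [coeff_succ_reducedSeries hM], fun q hq => ?_⟩
  rcases q with _ | q
  · exact coeff_zero_reducedSeries h1 i
  · simpa [Matrix.one_apply, Fin.ext_iff, show (i : ℕ) ≠ q by omega] using
      coeff_succ_reducedSeries hM i ⟨q, by omega⟩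

theorem coeffMatrix_rescale (μ : Fin N → K) (f : K⟦X⟧) :
    coeffMatrix (fun t => rescale (μ t) f) =
      diagonal μ * vandermonde μ * diagonal fun m : Fin N => coeff (m + 1 : ℕ) f := by
  ext t m
  simp [coeffMatrix, coeff_rescale, vandermonde, pow_succ, mul_comm]

theorem det_coeffMatrix_rescale_ne_zero {μ : Fin N → K} (hμ : Function.Injective μ)
    (hμ0 : ∀ t, μ t ≠ 0) {f : K⟦X⟧} (hf : ∀ m : Fin N, coeff (m + 1 : ℕ) f ≠ 0) :
    (coeffMatrix fun t => rescale (μ t) f).det ≠ 0 := by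
  rw [coeffMatrix_rescale, det_mul, det_mul, det_diagonal, det_diagonal]
  exact mul_ne_zero (mul_ne_zero (Finset.prod_ne_zero_iff.2 fun t _ => hμ0 t)
    (det_vandermonde_ne_zero_iff.2 hμ)) (Finset.prod_ne_zero_iff.2 fun m _ => hf m)

end PowerSeries

namespace Matrix

theorem det_eq_det_submatrix_succ_of_row_zero {R : Type*} [CommRing R] {n : ℕ}
    (A : Matrix (Fin (n + 1)) (Fin (n + 1)) R) (hA : A 0 = Pi.single 0 1) :
    A.det = (A.submatrix Fin.succ Fin.succ).det := by
  simp [det_succ_row_zero A, Fin.sum_univ_succ, hA]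

variable {K : Type*} [Field K] {N : ℕ}

def normalizingMatrix (a : Fin N → K) (C : Matrix (Fin N) (Fin N) K) :
    Matrix (Fin (N + 2)) (Fin (N + 2)) K :=
  of <| Fin.cons (Pi.single 0 1) <| Fin.cons (Pi.single 1 1) fun i =>
    Fin.cons (a i) (Fin.cons 0 (C i))

theorem det_normalizingMatrix (a : Fin N → K) (C : Matrix (Fin N) (Fin N) K) :
    (normalizingMatrix a C).det = C.det := by
  rw [det_eq_det_submatrix_succ_of_row_zero _ rfl, det_eq_det_submatrix_succ_of_row_zero]
  · rfl
  · ext j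
    refine Fin.cases ?_ (fun j => ?_) j <;> simp [normalizingMatrix, Fin.succ_succ_ne_one]

variable {M : Type*} [AddCommMonoid M] [Module K M] (a : Fin N → K) (C : Matrix (Fin N) (Fin N) K)
  (w : Fin (N + 2) → M)

theorem sum_normalizingMatrix_zero_smul : ∑ s, normalizingMatrix a C 0 s • w s = w 0 := by
  simp [normalizingMatrix]

theorem sum_normalizingMatrix_one_smul : ∑ s, normalizingMatrix a C 1 s • w s = w 1 := by
  simp [normalizingMatrix]

theorem sum_normalizingMatrix_succ_succ_smul (i : Fin N) :
    ∑ s, normalizingMatrix a C i.succ.succ s • w s =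
      a i • w 0 + ∑ t, C i t • w t.succ.succ := by
  simp [normalizingMatrix, Fin.sum_univ_succ]

end Matrix

theorem stmt_0_general (k n : ℕ) (hk : 2 ≤ k) (hn : 3 ≤ n)
    (lam : ℕ → ℂ) (hlam0 : lam 0 = 1)
    (hlam_ne0 : ∀ i, 1 ≤ i → i ≤ n - 2 → lam i ≠ 0)
    (hlam_inj : ∀ i j, i ≤ n - 2 → j ≤ n - 2 → lam i = lam j → i = j)
    (ρ : ℕ → ℂ) (hρ : ∀ j, 1 ≤ j → j ≤ n - 1 → ρ j ^ k = - lam (j - 1))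
    (c : ℕ → ℕ → ℂ)
    (hc : ∀ i j, c i j = ρ j * (lam (j - 1))⁻¹ ^ i * genBinom ((k : ℂ))⁻¹ i)
    (v : ℕ → PowerSeries ℂ)
    (hv0 : v 0 = 1) (hv1 : v 1 = PowerSeries.X)
    (hv : ∀ j, 1 ≤ j → j ≤ n - 1 → ∀ m,
      PowerSeries.coeff m (v (j + 1)) = if k ∣ m then c (m / k) j else 0) :
    ∃ (A : Matrix.GeneralLinearGroup (Fin (n + 1)) ℂ) (l : ℕ → ℕ)
      (g G : ℕ → PowerSeries ℂ),
      l 0 = 1 ∧ l 1 = 2 ∧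
      (∀ i, i < n - 2 → l i < l (i + 1)) ∧
      (∀ i, i ≤ n - 2 → (g i).order = l i) ∧
      (∀ i, i ≤ n - 2 → PowerSeries.coeff (l i) (g i) = 1) ∧
      (∀ i, i ≤ n - 2 → ∀ m, PowerSeries.coeff m (G i) =
        if k ∣ m then PowerSeries.coeff (m / k) (g i) else 0) ∧
      (∀ r : Fin (n + 1), ∑ s : Fin (n + 1), A.val r s • v (s : ℕ) =
        if (r : ℕ) = 0 then 1
        else if (r : ℕ) = 1 then PowerSeries.X
        else G ((r : ℕ) - 2)) := by
  obtain ⟨N, rfl⟩ : ∃ N, n = N + 1 := ⟨n - 1, by omega⟩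
  have hk0 : k ≠ 0 := by omega
  have hlam : ∀ t : Fin N, lam t ≠ 0 := by
    rintro ⟨_ | t, ht⟩
    · simp [hlam0]
    · exact hlam_ne0 (t + 1) (by omega) (by omega)
  have hρ0 : ∀ t : Fin N, ρ (t + 1) ≠ 0 := fun t h0 =>
    hlam t (by simpa [h0, zero_pow hk0] using hρ (t + 1) (by omega) (by omega))
  set h : Fin N → ℂ⟦X⟧ := fun t => rescale (lam t)⁻¹ (mk (genBinom (k : ℂ)⁻¹))
  have h1 : ∀ t, constantCoeff (h t) = 1 := fun t => by
    rw [← coeff_zero_eq_constantCoeff_apply]; simp [h, coeff_rescale, genBinom_zero]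
  have hM : IsUnit (coeffMatrix h).det := isUnit_iff_ne_zero.2 <|
    det_coeffMatrix_rescale_ne_zero
      (fun s t hst => Fin.ext (hlam_inj s t (by omega) (by omega) (inv_injective hst)))
      (fun t => inv_ne_zero (hlam t))
      (fun m => by simpa using genBinom_ne_zero (inv_natCast_ne_natCast hk) _)
  have hv2 : ∀ t : Fin N, v (t + 2) = ρ (t + 1) • expand k hk0 (h t) := by
    intro t
    ext m
    rw [hv (t + 1) (by omega) (by omega), coeff_smul, coeff_expand]
    split_ifs <;> simp [h, hc, coeff_rescale, mul_assoc]
  let B := (coeffMatrix h)⁻¹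
  let g : ℕ → ℂ⟦X⟧ := fun i => if hi : i < N then reducedSeries h ⟨i, hi⟩ else 0
  have hA :
      (normalizingMatrix (fun i => -∑ t, B i t) (of fun i t => B i t / ρ (t + 1))).det ≠ 0 := by
    have hBD : of (fun i t => B i t / ρ (t + 1)) = B * diagonal fun t : Fin N => (ρ (t + 1))⁻¹ := by
      ext; simp [div_eq_mul_inv]
    rw [det_normalizingMatrix, hBD, det_mul, det_diagonal]
    exact mul_ne_zero (isUnit_nonsing_inv_det _ hM).ne_zero
      (Finset.prod_ne_zero_iff.2 fun t _ => inv_ne_zero (hρ0 t))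
  refine ⟨.mkOfDetNeZero _ hA, (· + 1), g, fun i => expand k hk0 (g i), rfl, rfl,
    fun i _ => Nat.lt_succ_self _, fun i hi => ?_, fun i hi => ?_,
    fun i _ m => coeff_expand _ _ _, ?_⟩
  · simpa [g, show i < N by omega] using order_reducedSeries h1 hM ⟨i, by omega⟩
  · simpa [g, show i < N by omega] using
      coeff_succ_reducedSeries hM ⟨i, by omega⟩ ⟨i, by omega⟩
  · intro r
    refine Fin.cases ?_ (Fin.cases ?_ fun i => ?_) r
    · simpa [hv0] using sum_normalizingMatrix_zero_smul _ _ fun s : Fin (N + 2) => v s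
    · simpa [hv1] using sum_normalizingMatrix_one_smul _ _ fun s : Fin (N + 2) => v s
    · have hrow : ∀ t : Fin N, (B i t / ρ (t + 1)) • v (t + 2) = B i t • expand k hk0 (h t) := by
        intro t; rw [hv2, smul_smul, div_mul_cancel₀ _ (hρ0 t)]
      simp [sum_normalizingMatrix_succ_succ_smul, hv0, hrow, g, reducedSeries, smul_sub,
        Finset.sum_sub_distrib, Finset.sum_smul, B, neg_add_eq_sub]

/-- normal form of the standard embedding of a generalized Fermat curve of
type `(k,n)` at a fixed point of its generalized Fermat group: there are a matrix
`A ∈ GL(n+1, ℂ)`, integers `1 = l₀ < 2 = l₁ < l₂ < ⋯ < l_{n-2}` and power series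
`g₀, …, g_{n-2}` with `g i` of order exactly `l i` and leading coefficient `1`, such that
`A · v = (1, z, g₀(z^k), …, g_{n-2}(z^k))`.  Here `G i` denotes the substitution of `z^k`
into `g i`, characterized by its coefficients. -/
theorem stmt_0 (k n : ℕ) (hk : 2 ≤ k) (hn : 3 ≤ n)
    (lam : ℕ → ℂ) (hlam0 : lam 0 = 1)
    (hlam_ne0 : ∀ i, 1 ≤ i → i ≤ n - 2 → lam i ≠ 0)
    (hlam_ne1 : ∀ i, 1 ≤ i → i ≤ n - 2 → lam i ≠ 1)
    (hlam_inj : ∀ i j, i ≤ n - 2 → j ≤ n - 2 → lam i = lam j → i = j)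
    (ρ : ℕ → ℂ) (hρ : ∀ j, 1 ≤ j → j ≤ n - 1 → ρ j ^ k = - lam (j - 1))
    (c : ℕ → ℕ → ℂ)
    (hc : ∀ i j, c i j = ρ j * (lam (j - 1))⁻¹ ^ i * genBinom ((k : ℂ))⁻¹ i)
    (v : ℕ → PowerSeries ℂ)
    (hv0 : v 0 = 1) (hv1 : v 1 = PowerSeries.X)
    (hv : ∀ j, 1 ≤ j → j ≤ n - 1 → ∀ m,
      PowerSeries.coeff m (v (j + 1)) = if k ∣ m then c (m / k) j else 0) :
    ∃ (A : Matrix.GeneralLinearGroup (Fin (n + 1)) ℂ) (l : ℕ → ℕ)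
      (g G : ℕ → PowerSeries ℂ),
      l 0 = 1 ∧ l 1 = 2 ∧
      (∀ i, i < n - 2 → l i < l (i + 1)) ∧
      (∀ i, i ≤ n - 2 → (g i).order = l i) ∧
      (∀ i, i ≤ n - 2 → PowerSeries.coeff (l i) (g i) = 1) ∧
      (∀ i, i ≤ n - 2 → ∀ m, PowerSeries.coeff m (G i) =
        if k ∣ m then PowerSeries.coeff (m / k) (g i) else 0) ∧
      (∀ r : Fin (n + 1), ∑ s : Fin (n + 1), A.val r s • v (s : ℕ) =
        if (r : ℕ) = 0 then 1
        else if (r : ℕ) = 1 then PowerSeries.X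
        else G ((r : ℕ) - 2)) :=
  stmt_0_general k n hk hn lam hlam0 hlam_ne0 hlam_inj ρ hρ c hc v hv0 hv1 hv
end

section
/- There exists a nonzero vector (L_0, L_1, …, L_n) ∈ ℂ^{n+1} such that the formal power series L_0 v_0 + L_1 v_1 + ⋯ + L_n v_n ∈ ℂ[[z]] has order at least (n−1)k. Since (n−1)k > n for k ≥ 2 and n ≥ 3, the hyperplane {L_0 x_0 + ⋯ + L_n x_n = 0} has order of contact greater than n with the curve at p; that is, every fixed point of the generalized Fermat group is a hyperosculating point of the standard embedding of the generalized Fermat curve. -/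
/-!
Below order `(n - 1) k` the series `v_0, …, v_n` can only have nonzero coefficients at the
`n` exponents `1` and `0, k, …, (n - 2) k`, since `v_{j+1}` for `j ≥ 1` is a series in `z^k`.
Asking `L_0 v_0 + ⋯ + L_n v_n` to vanish at these exponents is a homogeneous linear system of
`n` equations in `n + 1` unknowns, so it has a nonzero solution.
-/

open PowerSeries

theorem PowerSeries.exists_ne_zero_le_order_sum_smul {K ι : Type*} [Field K] [Fintype ι]
    (v : ι → K⟦X⟧) (d : ℕ) (S : Finset ℕ) (hS : S.card < Fintype.card ι)
    (hv : ∀ j, ∀ m < d, m ∉ S → coeff m (v j) = 0) :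
    ∃ L : ι → K, L ≠ 0 ∧ (d : ℕ∞) ≤ (∑ j, L j • v j).order := by
  let A : Matrix S ι K := Matrix.of fun s j => coeff (s : ℕ) (v j)
  obtain ⟨L, hLker, hL0⟩ := Submodule.exists_mem_ne_zero_of_ne_bot <|
    LinearMap.ker_ne_bot_of_finrank_lt (f := A.mulVecLin) (by simpa using hS)
  refine ⟨L, hL0, le_order _ _ fun m hm => ?_⟩
  simp only [map_sum, coeff_smul, smul_eq_mul]
  by_cases hmS : m ∈ S
  · simpa [A, Matrix.mulVec, dotProduct, mul_comm] using congrFun hLker ⟨m, hmS⟩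
  · exact Finset.sum_eq_zero fun j _ => by rw [hv j m (by exact_mod_cast hm) hmS, mul_zero]

theorem stmt_2_general (k n : ℕ) (hn : 3 ≤ n)
    (c : ℕ → ℕ → ℂ)
    (v : ℕ → PowerSeries ℂ)
    (hv0 : v 0 = 1) (hv1 : v 1 = PowerSeries.X)
    (hv : ∀ j, 1 ≤ j → j ≤ n - 1 → ∀ m,
      PowerSeries.coeff m (v (j + 1)) = if k ∣ m then c (m / k) j else 0) :
    ∃ L : Fin (n + 1) → ℂ, L ≠ 0 ∧
      (((n - 1) * k : ℕ) : ℕ∞) ≤ (∑ j : Fin (n + 1), L j • v (j : ℕ)).order := by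
  let S := insert 1 ((Finset.range (n - 1)).image (· * k))
  have hS : S.card < Fintype.card (Fin (n + 1)) := by
    have : S.card ≤ n - 1 + 1 := (Finset.card_insert_le _ _).trans
      (Nat.succ_le_succ (Finset.card_image_le.trans (Finset.card_range _).le))
    simp only [Fintype.card_fin]
    omega
  refine exists_ne_zero_le_order_sum_smul (fun j : Fin (n + 1) => v j) _ S hS ?_
  rintro ⟨_ | _ | j, hj⟩ m hm hmS <;> simp only [Finset.mem_insert, Finset.mem_image,
    Finset.mem_range, S, not_or, not_exists, not_and] at hmS
  · simpa [hv0, coeff_one] using fun h => hmS.2 0 (by omega) (by simp [h])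
  · simp [hv1, coeff_X, hmS.1]
  · rw [hv (j + 1) (by omega) (by omega), if_neg]
    rintro ⟨i, rfl⟩
    exact hmS.2 i (by nlinarith) (mul_comm _ _)

/-- there is a nonzero linear form `L` such that the power series
`L₀ v₀ + ⋯ + Lₙ vₙ` has order at least `(n-1)k`; i.e. every fixed point of the
generalized Fermat group is a hyperosculating point of the standard embedding of the
generalized Fermat curve. -/
theorem stmt_2 (k n : ℕ) (hk : 2 ≤ k) (hn : 3 ≤ n)
    (lam : ℕ → ℂ) (hlam0 : lam 0 = 1)
    (hlam_ne0 : ∀ i, 1 ≤ i → i ≤ n - 2 → lam i ≠ 0)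
    (hlam_ne1 : ∀ i, 1 ≤ i → i ≤ n - 2 → lam i ≠ 1)
    (hlam_inj : ∀ i j, i ≤ n - 2 → j ≤ n - 2 → lam i = lam j → i = j)
    (ρ : ℕ → ℂ) (hρ : ∀ j, 1 ≤ j → j ≤ n - 1 → ρ j ^ k = - lam (j - 1))
    (c : ℕ → ℕ → ℂ)
    (hc : ∀ i j, c i j = ρ j * (lam (j - 1))⁻¹ ^ i * genBinom ((k : ℂ))⁻¹ i)
    (v : ℕ → PowerSeries ℂ)
    (hv0 : v 0 = 1) (hv1 : v 1 = PowerSeries.X)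
    (hv : ∀ j, 1 ≤ j → j ≤ n - 1 → ∀ m,
      PowerSeries.coeff m (v (j + 1)) = if k ∣ m then c (m / k) j else 0) :
    ∃ L : Fin (n + 1) → ℂ, L ≠ 0 ∧
      (((n - 1) * k : ℕ) : ℕ∞) ≤ (∑ j : Fin (n + 1), L j • v (j : ℕ)).order :=
  stmt_2_general k n hn c v hv0 hv1 hv
end

section
/- For every integer m ≥ 0, the homogeneous component Γ(S)_m decomposes as the internal direct sum Γ(S)_m = ⊕_{j=0}^{k−1} x̄_1^j · Q(m−j), where x̄_1 denotes the class of x_1 in Γ(S); that is, every element of Γ(S)_m can be written uniquely in the form ∑_{j=0}^{k−1} x̄_1^j q_j with q_j ∈ Q(m−j). -/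
/-!
Since `x₁^k + g_i ∈ I(S)` with `g_i = λ_i x₀^k + x_{i+2}^k` free of `x₁`, we have `x̄₁^k = -ḡ₀`
in `Γ(S)`; reducing the exponent of `x₁` modulo `k` in each monomial of degree `m` gives the
decomposition. For uniqueness, let `J` be the ideal generated by the `x₁`-free differences
`g_i - g₀`. Reading polynomials as polynomials in `x₁` over `ℂ[x]/J` sends `I(S)` into the
multiples of the monic polynomial `x₁^k + ḡ₀`, and such a multiple of degree `< k` vanishes.
-/

open MvPolynomial

open Fin.NatCast in
/-- The homogeneous ideal `I(S)` of a generalized Fermat curve of type `(k,n)`, generated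
by the forms `lam i * x₀^k + x₁^k + x_{i+2}^k` for `0 ≤ i ≤ n - 2` (with `lam 0 = 1`). -/
noncomputable def fermatIdeal (n k : ℕ) (lam : ℕ → ℂ) :
    Ideal (MvPolynomial (Fin (n + 1)) ℂ) :=
  Ideal.span ((fun i : ℕ =>
    C (lam i) * X 0 ^ k + X 1 ^ k + X ((i + 2 : ℕ) : Fin (n + 1)) ^ k) ''
    {i : ℕ | i ≤ n - 2})

/-- `Γ(S)_d`: the image in `Γ(S) = ℂ[x₀,…,xₙ]/I(S)` of the homogeneous polynomials of
degree `d`. -/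
noncomputable def gammaSubmodule (n k : ℕ) (lam : ℕ → ℂ) (d : ℕ) :
    Submodule ℂ (MvPolynomial (Fin (n + 1)) ℂ ⧸ fermatIdeal n k lam) :=
  Submodule.map (Ideal.Quotient.mkₐ ℂ (fermatIdeal n k lam)).toLinearMap
    (homogeneousSubmodule (Fin (n + 1)) ℂ d)

/-- `Q(d)`: the image in `Γ(S) = ℂ[x₀,…,xₙ]/I(S)` of the homogeneous polynomials of
degree `d` in the variables `x₀, x₂, x₃, …, xₙ` (not involving `x₁`), with `Q(d) = 0`
for `d < 0`. -/
noncomputable def qSubmodule (n k : ℕ) (lam : ℕ → ℂ) (d : ℤ) :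
    Submodule ℂ (MvPolynomial (Fin (n + 1)) ℂ ⧸ fermatIdeal n k lam) :=
  if 0 ≤ d then
    Submodule.map (Ideal.Quotient.mkₐ ℂ (fermatIdeal n k lam)).toLinearMap
      ((homogeneousSubmodule (Fin (n + 1)) ℂ d.toNat) ⊓
        (Subalgebra.toSubmodule (MvPolynomial.supported ℂ {j : Fin (n + 1) | j ≠ 1})))
  else ⊥

namespace Polynomial

lemma coeff_sum_range_C_mul_X_pow {R : Type*} [Semiring R] (c : ℕ → R) (k i : ℕ) :
    (∑ j ∈ Finset.range k, C (c j) * X ^ j).coeff i = if i < k then c i else 0 := by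
  simp only [finsetSum_coeff, coeff_C_mul_X_pow, Finset.sum_ite_eq, Finset.mem_range]

theorem Monic.eq_zero_of_dvd_sum_X_pow_mul_C {R : Type*} [CommRing R] {h : R[X]} (hh : h.Monic)
    {k : ℕ} (hdeg : h.natDegree = k) {c : ℕ → R}
    (hdvd : h ∣ ∑ j ∈ Finset.range k, X ^ j * C (c j)) {j : ℕ} (hj : j < k) : c j = 0 := by
  nontriviality R
  simp only [X_pow_mul_C] at hdvd
  have hlt : (∑ j ∈ Finset.range k, C (c j) * X ^ j).degree < h.degree := by
    rw [degree_eq_natDegree hh.ne_zero, hdeg, degree_lt_iff_coeff_zero]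
    intro i hi
    rw [coeff_sum_range_C_mul_X_pow, if_neg (by omega)]
  have hzero : ∑ j ∈ Finset.range k, C (c j) * X ^ j = 0 :=
    ((modByMonic_eq_self_iff hh).mpr hlt).symm.trans ((modByMonic_eq_zero_iff_dvd hh).mpr hdvd)
  simpa [coeff_sum_range_C_mul_X_pow, hj] using congrArg (coeff · j) hzero

end Polynomial

lemma Finsupp.degree_erase_add {σ : Type*} (i : σ) (d : σ →₀ ℕ) :
    (d.erase i).degree + d i = d.degree := by
  rw [← Finsupp.degree_single i (d i), ← map_add, Finsupp.erase_add_single]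

open Fin.NatCast in
lemma Fin.natCast_ne_one {n i : ℕ} (hn : 1 ≤ n) (hin : i ≤ n) (hi : i ≠ 1) :
    (i : Fin (n + 1)) ≠ 1 := by
  rw [Ne, Fin.ext_iff, Fin.val_natCast, Fin.val_one', Nat.mod_eq_of_lt (by omega),
    Nat.mod_eq_of_lt (by omega)]
  exact hi

namespace MvPolynomial

section Monomial

variable {σ R : Type*} [CommSemiring R]

lemma monomial_eq_X_pow_mul_monomial_erase (i : σ) (d : σ →₀ ℕ) (c : R) :
    monomial d c = X i ^ d i * monomial (d.erase i) c := by
  rw [X_pow_eq_monomial, monomial_mul, one_mul, Finsupp.single_add_erase]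

lemma monomial_erase_mem_supported [DecidableEq σ] (i : σ) (d : σ →₀ ℕ) (c : R) :
    monomial (d.erase i) c ∈ supported R {j | j ≠ i} := by
  by_cases hc : c = 0
  · simp [hc]
  rw [mem_supported, vars_monomial hc, Finsupp.support_erase, Finset.coe_erase]
  exact fun j hj => hj.2

end Monomial

section SplitVar

variable {σ R : Type*} [CommRing R] [DecidableEq σ]

noncomputable def splitVar (J : Ideal (MvPolynomial σ R)) (i : σ) :
    MvPolynomial σ R →ₐ[R] Polynomial (MvPolynomial σ R ⧸ J) :=
  aeval fun j => if j = i then Polynomial.X else Polynomial.C (Ideal.Quotient.mk J (X j))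

variable (J : Ideal (MvPolynomial σ R)) (i : σ)

lemma splitVar_X_self : splitVar J i (X i) = Polynomial.X := by
  simp [splitVar]

lemma splitVar_of_mem_supported {p : MvPolynomial σ R} (hp : p ∈ supported R {j | j ≠ i}) :
    splitVar J i p = Polynomial.C (Ideal.Quotient.mk J p) := by
  change (splitVar J i : MvPolynomial σ R →+* _) p = (Polynomial.C.comp (Ideal.Quotient.mk J)) p
  refine hom_congr_vars (R := R) (S := Polynomial (MvPolynomial σ R ⧸ J)) ?_ ?_ rfl
  · ext c : 1
    simp only [splitVar, RingHom.coe_comp, RingHom.coe_coe, Function.comp_apply, aeval_C,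
      Polynomial.algebraMap_apply]
    exact congrArg Polynomial.C (Ideal.Quotient.mk_algebraMap (I := J) (x := c)).symm
  · intro j hj _
    have hji : j ≠ i := mem_supported.mp hp hj
    simp [splitVar, hji]

end SplitVar

end MvPolynomial

namespace GeneralizedFermat

open Fin.NatCast

variable {n k : ℕ} {lam : ℕ → ℂ}

/-- `g_i = λ_i x₀^k + x_{i+2}^k`, so that `I(S)` is generated by the `x₁^k + g_i`. -/
noncomputable def tail (n k : ℕ) (lam : ℕ → ℂ) (i : ℕ) : MvPolynomial (Fin (n + 1)) ℂ :=
  C (lam i) * X 0 ^ k + X ((i + 2 : ℕ) : Fin (n + 1)) ^ k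

/-- `I(S) = J + (x₁^k + g₀)`: modulo `J` all generators of `I(S)` coincide. -/
noncomputable def tailDiffIdeal (n k : ℕ) (lam : ℕ → ℂ) : Ideal (MvPolynomial (Fin (n + 1)) ℂ) :=
  Ideal.span ((fun i => tail n k lam i - tail n k lam 0) '' {i | i ≤ n - 2})

local notation "Γ" => MvPolynomial (Fin (n + 1)) ℂ ⧸ fermatIdeal n k lam
local notation "π" => Ideal.Quotient.mk (fermatIdeal n k lam)
local notation "ρ" => Ideal.Quotient.mk (tailDiffIdeal n k lam)

lemma fermatIdeal_eq_span :
    fermatIdeal n k lam = Ideal.span ((fun i => X 1 ^ k + tail n k lam i) '' {i | i ≤ n - 2}) := by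
  unfold fermatIdeal tail
  congr 2
  funext i
  ring

lemma X_one_pow_add_tail_mem {i : ℕ} (hi : i ≤ n - 2) :
    X 1 ^ k + tail n k lam i ∈ fermatIdeal n k lam := by
  rw [fermatIdeal_eq_span]
  exact Ideal.subset_span ⟨i, hi, rfl⟩

lemma tail_mem_supported (hn : 2 ≤ n) {i : ℕ} (hi : i ≤ n - 2) :
    tail n k lam i ∈ supported ℂ {j | j ≠ 1} := by
  have h0 : (0 : Fin (n + 1)) ≠ 1 := by
    simpa using Fin.natCast_ne_one (n := n) (i := 0) (by omega) (by omega) (by omega)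
  have h2 : ((i + 2 : ℕ) : Fin (n + 1)) ≠ 1 := Fin.natCast_ne_one (by omega) (by omega) (by omega)
  exact add_mem (mul_mem (Subalgebra.algebraMap_mem _ (lam i)) (pow_mem (X_mem_supported.mpr h0) k))
    (pow_mem (X_mem_supported.mpr h2) k)

lemma isHomogeneous_tail (i : ℕ) : (tail n k lam i).IsHomogeneous k :=
  (isHomogeneous_C_mul_X_pow _ _ _).add (isHomogeneous_X_pow _ _)

lemma mk_X_one_pow : π (X 1) ^ k = π (-tail n k lam 0) := by
  rw [← map_pow, Ideal.Quotient.eq, sub_neg_eq_add]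
  exact X_one_pow_add_tail_mem (Nat.zero_le _)

lemma tailDiffIdeal_le : tailDiffIdeal n k lam ≤ fermatIdeal n k lam := by
  rw [tailDiffIdeal, Ideal.span_le]
  rintro - ⟨i, hi, rfl⟩
  simpa only [add_sub_add_left_eq_sub, SetLike.mem_coe] using
    sub_mem (X_one_pow_add_tail_mem (k := k) (lam := lam) hi)
      (X_one_pow_add_tail_mem (Nat.zero_le _))

lemma dvd_splitVar_of_mem_fermatIdeal (hn : 2 ≤ n) {f : MvPolynomial (Fin (n + 1)) ℂ}
    (hf : f ∈ fermatIdeal n k lam) :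
    Polynomial.X ^ k + Polynomial.C (ρ (tail n k lam 0)) ∣
      splitVar (tailDiffIdeal n k lam) 1 f := by
  rw [fermatIdeal_eq_span] at hf
  induction hf using Submodule.span_induction with
  | mem x hx =>
    obtain ⟨i, hi, rfl⟩ := hx
    have hJ : ρ (tail n k lam i) = ρ (tail n k lam 0) :=
      Ideal.Quotient.eq.mpr (Ideal.subset_span ⟨i, hi, rfl⟩)
    rw [map_add, map_pow, splitVar_X_self,
      splitVar_of_mem_supported _ _ (tail_mem_supported hn hi), hJ]
  | zero => exact dvd_zero _
  | add x y _ _ hx hy =>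
    rw [map_add]
    exact dvd_add hx hy
  | smul a x _ hx =>
    rw [smul_eq_mul, map_mul]
    exact Dvd.dvd.mul_left (α := Polynomial (MvPolynomial (Fin (n + 1)) ℂ ⧸ tailDiffIdeal n k lam))
      hx _

theorem mem_fermatIdeal_of_sum_X_one_pow_mul_mem (hk : 0 < k) (hn : 2 ≤ n)
    {p : ℕ → MvPolynomial (Fin (n + 1)) ℂ} (hp : ∀ j < k, p j ∈ supported ℂ {j | j ≠ 1})
    (hsum : ∑ j ∈ Finset.range k, X 1 ^ j * p j ∈ fermatIdeal n k lam) {j : ℕ} (hj : j < k) :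
    p j ∈ fermatIdeal n k lam := by
  have himage : splitVar (tailDiffIdeal n k lam) 1 (∑ j ∈ Finset.range k, X 1 ^ j * p j) =
      ∑ j ∈ Finset.range k, Polynomial.X ^ j * Polynomial.C (ρ (p j)) := by
    rw [map_sum]
    refine Finset.sum_congr rfl fun i hi => ?_
    rw [map_mul, map_pow, splitVar_X_self,
      splitVar_of_mem_supported _ _ (hp i (Finset.mem_range.mp hi))]
  have hdvd := dvd_splitVar_of_mem_fermatIdeal hn hsum
  rw [himage] at hdvd
  have hpj : ρ (p j) = 0 := by
    nontriviality MvPolynomial (Fin (n + 1)) ℂ ⧸ tailDiffIdeal n k lam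
    exact (Polynomial.monic_X_pow_add_C (ρ (tail n k lam 0)) hk.ne').eq_zero_of_dvd_sum_X_pow_mul_C
      Polynomial.natDegree_X_pow_add_C hdvd hj
  exact tailDiffIdeal_le (Ideal.Quotient.eq_zero_iff_mem.mp hpj)

lemma exists_mem_supported_of_mem_qSubmodule {e : ℤ} {y : Γ} (hy : y ∈ qSubmodule n k lam e) :
    ∃ p ∈ supported ℂ {j | j ≠ 1}, π p = y := by
  unfold qSubmodule at hy
  split_ifs at hy
  · obtain ⟨p, hp, rfl⟩ := hy
    exact ⟨p, (Submodule.mem_inf.mp hp).2, rfl⟩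
  · rw [Submodule.mem_bot] at hy
    exact ⟨0, zero_mem _, by rw [map_zero, hy]⟩

lemma eq_zero_of_sum_X_one_pow_mul_eq_zero (hk : 0 < k) (hn : 2 ≤ n) {e : ℕ → ℤ} {q : ℕ → Γ}
    (hq : ∀ j < k, q j ∈ qSubmodule n k lam (e j))
    (hsum : ∑ j ∈ Finset.range k, π (X 1) ^ j * q j = 0) {j : ℕ} (hj : j < k) : q j = 0 := by
  choose! p hp hpq using fun j hj => exists_mem_supported_of_mem_qSubmodule (hq j hj)
  rw [← hpq j hj, Ideal.Quotient.eq_zero_iff_mem]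
  refine mem_fermatIdeal_of_sum_X_one_pow_mul_mem hk hn hp ?_ hj
  rw [← Ideal.Quotient.eq_zero_iff_mem, ← hsum, map_sum]
  refine Finset.sum_congr rfl fun i hi => ?_
  rw [map_mul, map_pow, hpq i (Finset.mem_range.mp hi)]

lemma eq_of_sum_X_one_pow_mul_eq (hk : 0 < k) (hn : 2 ≤ n) {e : ℕ → ℤ} {q q' : ℕ → Γ}
    (hq : ∀ j < k, q j ∈ qSubmodule n k lam (e j)) (hq' : ∀ j < k, q' j ∈ qSubmodule n k lam (e j))
    (hsum : ∑ j ∈ Finset.range k, π (X 1) ^ j * q j = ∑ j ∈ Finset.range k, π (X 1) ^ j * q' j)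
    {j : ℕ} (hj : j < k) : q j = q' j := by
  rw [← sub_eq_zero]
  refine eq_zero_of_sum_X_one_pow_mul_eq_zero (q := q - q') hk hn
    (fun i hi => sub_mem (hq i hi) (hq' i hi)) ?_ hj
  simp only [Pi.sub_apply, mul_sub, Finset.sum_sub_distrib, hsum, sub_self]

noncomputable def x1PowSum (n k : ℕ) (lam : ℕ → ℂ) (m : ℕ) :
    Submodule ℂ (MvPolynomial (Fin (n + 1)) ℂ ⧸ fermatIdeal n k lam) :=
  ⨆ j ∈ Finset.range k,
    (qSubmodule n k lam (m - j)).map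
      (LinearMap.mulLeft ℂ (Ideal.Quotient.mk (fermatIdeal n k lam) (X 1) ^ j))

lemma exists_of_mem_x1PowSum {m : ℕ} {y : Γ} (hy : y ∈ x1PowSum n k lam m) :
    ∃ q : ℕ → Γ, (∀ j < k, q j ∈ qSubmodule n k lam (m - j)) ∧
      y = ∑ j ∈ Finset.range k, π (X 1) ^ j * q j := by
  obtain ⟨μ, rfl⟩ := (Submodule.mem_iSup_finset_iff_exists_sum _ y).mp hy
  choose q hq hμ using fun j => Submodule.mem_map.mp (μ j).2
  exact ⟨q, fun j _ => hq j, Finset.sum_congr rfl fun j _ => (hμ j).symm⟩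

lemma X_one_pow_mul_mem_x1PowSum {m j : ℕ} (hj : j < k) {y : Γ}
    (hy : y ∈ qSubmodule n k lam (m - j)) : π (X 1) ^ j * y ∈ x1PowSum n k lam m :=
  Submodule.mem_iSup_of_mem j <| Submodule.mem_iSup_of_mem (Finset.mem_range.mpr hj) <|
    Submodule.mem_map_of_mem hy

lemma mk_mem_qSubmodule {e : ℕ} {p : MvPolynomial (Fin (n + 1)) ℂ} (hp : p.IsHomogeneous e)
    (hs : p ∈ supported ℂ {j | j ≠ 1}) : π p ∈ qSubmodule n k lam e := by
  rw [qSubmodule, if_pos (Int.natCast_nonneg e), Int.toNat_natCast]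
  exact Submodule.mem_map_of_mem ⟨hp, hs⟩

lemma mk_monomial_mem_x1PowSum (hk : 0 < k) (hn : 2 ≤ n) {m : ℕ} {d : Fin (n + 1) →₀ ℕ}
    (hd : d.degree = m) (c : ℂ) : π (monomial d c) ∈ x1PowSum n k lam m := by
  have hle : d 1 ≤ m := hd ▸ Finsupp.le_degree 1 d
  have hdeg := Finsupp.degree_erase_add 1 d
  have hdiv := Nat.mod_add_div (d 1) k
  set r := (-tail n k lam 0) ^ (d 1 / k) * monomial (d.erase 1) c
  have hr : r.IsHomogeneous (m - d 1 % k) := by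
    have hmon : (monomial (d.erase 1) c).IsHomogeneous (m - d 1) :=
      isHomogeneous_monomial c (by omega)
    have h := ((isHomogeneous_tail (k := k) (lam := lam) 0).neg.pow (d 1 / k)).mul hmon
    rwa [show k * (d 1 / k) + (m - d 1) = m - d 1 % k by omega] at h
  have hsplit : π (monomial d c) = π (X 1) ^ (d 1 % k) * π r := by
    have hpow : X (R := ℂ) (1 : Fin (n + 1)) ^ d 1 = X 1 ^ (d 1 % k) * (X 1 ^ k) ^ (d 1 / k) := by
      rw [← pow_mul, ← pow_add, hdiv]
    rw [monomial_eq_X_pow_mul_monomial_erase 1, hpow]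
    simp only [r, map_mul, map_pow, mk_X_one_pow, mul_assoc]
  rw [hsplit]
  refine X_one_pow_mul_mem_x1PowSum (Nat.mod_lt _ hk) ?_
  rw [← Nat.cast_sub (by omega)]
  exact mk_mem_qSubmodule hr <|
    mul_mem (pow_mem (neg_mem (tail_mem_supported hn (Nat.zero_le _))) _)
      (monomial_erase_mem_supported _ _ _)

lemma gammaSubmodule_le_x1PowSum (hk : 0 < k) (hn : 2 ≤ n) (m : ℕ) :
    gammaSubmodule n k lam m ≤ x1PowSum n k lam m := by
  rintro - ⟨p, hp, rfl⟩
  change π p ∈ _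
  rw [← support_sum_monomial_coeff p, map_sum]
  refine Submodule.sum_mem _ fun d hd => mk_monomial_mem_x1PowSum hk hn ?_ _
  rw [Finsupp.degree_eq_weight_one]
  exact hp (mem_support_iff.mp hd)

end GeneralizedFermat

theorem stmt_4_general (k n : ℕ) (hk : 2 ≤ k) (hn : 2 ≤ n)
    (lam : ℕ → ℂ)
    (m : ℕ) :
    ∀ y ∈ gammaSubmodule n k lam m,
      ∃ q : ℕ → (MvPolynomial (Fin (n + 1)) ℂ ⧸ fermatIdeal n k lam),
        (∀ j, j < k → q j ∈ qSubmodule n k lam ((m : ℤ) - (j : ℤ))) ∧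
        y = ∑ j ∈ Finset.range k,
              (Ideal.Quotient.mk (fermatIdeal n k lam) (X 1)) ^ j * q j ∧
        ∀ q' : ℕ → (MvPolynomial (Fin (n + 1)) ℂ ⧸ fermatIdeal n k lam),
          (∀ j, j < k → q' j ∈ qSubmodule n k lam ((m : ℤ) - (j : ℤ))) →
          y = ∑ j ∈ Finset.range k,
                (Ideal.Quotient.mk (fermatIdeal n k lam) (X 1)) ^ j * q' j →
          ∀ j, j < k → q' j = q j := by
  intro y hy
  obtain ⟨q, hq, rfl⟩ := GeneralizedFermat.exists_of_mem_x1PowSum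
    (GeneralizedFermat.gammaSubmodule_le_x1PowSum (by omega) hn m hy)
  exact ⟨q, hq, rfl, fun q' hq' hsum j hj =>
    GeneralizedFermat.eq_of_sum_X_one_pow_mul_eq (by omega) hn hq' hq hsum.symm hj⟩

/-- every element of `Γ(S)_m` is written uniquely as
`∑_{j=0}^{k-1} x̄₁^j q_j` with `q_j ∈ Q(m - j)`, i.e.
`Γ(S)_m = ⊕_{j=0}^{k-1} x̄₁^j · Q(m - j)`. -/
theorem stmt_4 (k n : ℕ) (hk : 2 ≤ k) (hn : 2 ≤ n)
    (lam : ℕ → ℂ) (hlam0 : lam 0 = 1)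
    (hlam_ne0 : ∀ i, 1 ≤ i → i ≤ n - 2 → lam i ≠ 0)
    (hlam_ne1 : ∀ i, 1 ≤ i → i ≤ n - 2 → lam i ≠ 1)
    (hlam_inj : ∀ i j, i ≤ n - 2 → j ≤ n - 2 → lam i = lam j → i = j)
    (m : ℕ) :
    ∀ y ∈ gammaSubmodule n k lam m,
      ∃ q : ℕ → (MvPolynomial (Fin (n + 1)) ℂ ⧸ fermatIdeal n k lam),
        (∀ j, j < k → q j ∈ qSubmodule n k lam ((m : ℤ) - (j : ℤ))) ∧
        y = ∑ j ∈ Finset.range k,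
              (Ideal.Quotient.mk (fermatIdeal n k lam) (X 1)) ^ j * q j ∧
        ∀ q' : ℕ → (MvPolynomial (Fin (n + 1)) ℂ ⧸ fermatIdeal n k lam),
          (∀ j, j < k → q' j ∈ qSubmodule n k lam ((m : ℤ) - (j : ℤ))) →
          y = ∑ j ∈ Finset.range k,
                (Ideal.Quotient.mk (fermatIdeal n k lam) (X 1)) ^ j * q' j →
          ∀ j, j < k → q' j = q j :=
  stmt_4_general k n hk hn lam m
end

section
/- Let k ≥ 2 and n ≥ 3 be integers with (n−1)(k−1) > 2. Set g := (k^{n−1}·((n−1)(k−1) − 2) + 2)/2 and, for 0 ≤ j ≤ k−1, set t_j := (1/2)·k^{n−2}·(n(k−1) − 2 − 2j) + δ_{k−1,j} − 1 (a nonnegative integer, where δ_{k−1,j} is the Kronecker delta). Then the following identity holds in ℚ: ∑_{j=0}^{k−1} ∑_{i=0}^{t_j} (k·i + j + 1) − g(g+1)/2 = (1/24)·(k−1)·(k^{n−1} − 2)·(k^n + k^{n−1} − 12). (This quantity is the lower bound ŵ(p) for the Weierstrass weight of a fixed point p of the generalized Fermat group.) -/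
private lemma sum_lin (m : ℕ) (a c : ℚ) :
    ∑ i ∈ Finset.range m, (a * (i : ℚ) + c + 1) =
      a * ((m : ℚ) * ((m : ℚ) - 1) / 2) + (c + 1) * (m : ℚ) := by
  induction m with
  | zero => simp
  | succ p ih => rw [Finset.sum_range_succ, ih]; push_cast; ring

private lemma sum_quad (m : ℕ) (a b c : ℚ) :
    ∑ j ∈ Finset.range m, (a * (j : ℚ) ^ 2 + b * (j : ℚ) + c) =
      a * ((m : ℚ) * ((m : ℚ) - 1) * (2 * (m : ℚ) - 1) / 6) +
        b * ((m : ℚ) * ((m : ℚ) - 1) / 2) + c * (m : ℚ) := by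
  induction m with
  | zero => simp
  | succ p ih => rw [Finset.sum_range_succ, ih]; push_cast; ring

/-- the lower bound `ŵ(p)` for the Weierstrass weight of a fixed point of the
generalized Fermat group: with `g` the genus and `t_j = s(r-j) - 1`,
`∑_{j=0}^{k-1} ∑_{i=0}^{t_j} (k·i + j + 1) − g(g+1)/2
  = (1/24)·(k−1)·(k^{n−1} − 2)·(k^n + k^{n−1} − 12)`. -/
theorem stmt_6 (k n : ℕ) (hk : 2 ≤ k) (hn : 3 ≤ n) (hnk : 2 < (n - 1) * (k - 1))
    (g : ℕ)
    (hg : (g : ℚ) = ((k : ℚ) ^ (n - 1) * (((n : ℚ) - 1) * ((k : ℚ) - 1) - 2) + 2) / 2)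
    (t : ℕ → ℕ)
    (ht : ∀ j, j ≤ k - 1 → (t j : ℚ) =
      (1 / 2 : ℚ) * (k : ℚ) ^ (n - 2) * ((n : ℚ) * ((k : ℚ) - 1) - 2 - 2 * (j : ℚ)) +
        (if j = k - 1 then 1 else 0) - 1) :
    ∑ j ∈ Finset.range k, ∑ i ∈ Finset.range (t j + 1), ((k : ℚ) * (i : ℚ) + (j : ℚ) + 1) -
        (g : ℚ) * ((g : ℚ) + 1) / 2 =
      (1 / 24 : ℚ) * ((k : ℚ) - 1) * ((k : ℚ) ^ (n - 1) - 2) *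
        ((k : ℚ) ^ n + (k : ℚ) ^ (n - 1) - 12) := by
  obtain ⟨k', rfl⟩ : ∃ k', k = k' + 1 := ⟨k - 1, by omega⟩
  have hn1 : n - 1 = (n - 2) + 1 := by omega
  have hn0 : n = (n - 2) + 2 := by omega
  set K : ℚ := ((k' + 1 : ℕ) : ℚ) with hKdef
  set P : ℚ := K ^ (n - 2) with hPdef
  set Nq : ℚ := (n : ℚ) with hNdef
  have hpow1 : K ^ (n - 1) = P * K := by rw [hn1, pow_succ, ← hPdef]
  have hpow0 : K ^ n = P * K ^ 2 := by rw [hn0, pow_add, ← hPdef]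
  have htj : ∀ j, j < k' →
      (t j : ℚ) = (1 / 2) * P * (Nq * (K - 1) - 2) - P * (j : ℚ) - 1 := by
    intro j hj
    rw [ht j (by omega), if_neg (by omega)]
    ring
  have htk : (t k' : ℚ) = (1 / 2) * P * (Nq * (K - 1) - 2) - P * (k' : ℚ) := by
    rw [ht k' (by omega), if_pos (by omega)]
    ring
  have hsum : ∑ j ∈ Finset.range (k' + 1), ∑ i ∈ Finset.range (t j + 1),
        (K * (i : ℚ) + (j : ℚ) + 1)
      = ∑ j ∈ Finset.range (k' + 1),
        (K * ((t j : ℚ) + 1) * (t j : ℚ) / 2 + ((j : ℚ) + 1) * ((t j : ℚ) + 1)) := by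
    refine Finset.sum_congr rfl fun j _ => ?_
    rw [sum_lin]
    push_cast
    ring
  rw [hg, hpow1, hpow0, hsum, Finset.sum_range_succ, htk]
  have hsum2 : ∑ j ∈ Finset.range k',
        (K * ((t j : ℚ) + 1) * (t j : ℚ) / 2 + ((j : ℚ) + 1) * ((t j : ℚ) + 1))
      = ∑ j ∈ Finset.range k',
        ((K * P ^ 2 / 2 - P) * (j : ℚ) ^ 2 +
          (-(K * ((1 / 2) * P * (Nq * (K - 1) - 2)) * P) + K * P / 2 +
            (1 / 2) * P * (Nq * (K - 1) - 2) - P) * (j : ℚ) +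
          (K * (((1 / 2) * P * (Nq * (K - 1) - 2)) ^ 2 -
            (1 / 2) * P * (Nq * (K - 1) - 2)) / 2 + (1 / 2) * P * (Nq * (K - 1) - 2))) := by
    refine Finset.sum_congr rfl fun j hj => ?_
    rw [htj j (Finset.mem_range.mp hj)]
    ring
  rw [hsum2, sum_quad, hKdef]
  push_cast
  ring
end
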